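/- Suppose m is odd. Then the bilinear form 𝔅 is Spin(1, 2m)-invariant: for all indices a, b ∈ {0, 1, …, 2m} with a ≠ b and all σ, τ ∈ P, one has 𝔅(Γ_a Γ_b σ, τ) + 𝔅(σ, Γ_a Γ_b τ) = 0; that is, 𝔅 is invariant under the infinitesimal action of the Lie algebra so(1, 2m) represented by the operators Γ_a Γ_b. -/

import Mathlib

noncomputable section

/-- The spinor space `P`: complex functions on subsets of `Fin m`
(the fermionic Fock model of the exterior algebra of `ℂ^m`). -/
abbrev SpinorSpace (m : ℕ) := Finset (Fin m) → ℂ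

/-- The creation operator `c_j`. -/
def creation {m : ℕ} (j : Fin m) (f : SpinorSpace m) : SpinorSpace m := fun S =>
  if j ∈ S then (-1 : ℂ) ^ (S.filter fun i => i < j).card * f (S.erase j) else 0

/-- The annihilation operator `a_j`. -/
def annihilation {m : ℕ} (j : Fin m) (f : SpinorSpace m) : SpinorSpace m := fun S =>
  if j ∈ S then 0 else (-1 : ℂ) ^ (S.filter fun i => i < j).card * f (insert j S)

/-- The gamma operators `Γ_I`, `I = 1, …, 2m`, here indexed by `Fin (2 * m)` (0-based):
`Γ_j = c_j + a_j` and `Γ_{m+j} = i (c_j − a_j)` for `j = 1, …, m`. -/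
def gammaOp {m : ℕ} (I : Fin (2 * m)) (f : SpinorSpace m) : SpinorSpace m :=
  if h : (I : ℕ) < m then
    creation ⟨(I : ℕ), h⟩ f + annihilation ⟨(I : ℕ), h⟩ f
  else
    Complex.I • (creation ⟨(I : ℕ) - m, by have := I.isLt; omega⟩ f
      - annihilation ⟨(I : ℕ) - m, by have := I.isLt; omega⟩ f)

/-- The Hermitian inner product `⟨f, g⟩ = Σ_S conj (f S) * g S` on the spinor space. -/
def herm {m : ℕ} (f g : SpinorSpace m) : ℂ :=
  ∑ S : Finset (Fin m), (starRingEnd ℂ) (f S) * g S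

/-- The composition `Γ_{I₁} ∘ Γ_{I₂} ∘ ⋯ ∘ Γ_{I_k}` corresponding to a list of indices. -/
def gammaProd {m : ℕ} (l : List (Fin (2 * m))) : SpinorSpace m → SpinorSpace m :=
  l.foldr (fun I F => gammaOp I ∘ F) id

/-- The conjugation operator `κ`. -/
def conjOp {m : ℕ} (f : SpinorSpace m) : SpinorSpace m := fun S => (starRingEnd ℂ) (f S)

/-- The conjugate-linear operator `A = Γ_1 ∘ Γ_2 ∘ ⋯ ∘ Γ_m ∘ κ`. -/
def opA (m : ℕ) : SpinorSpace m → SpinorSpace m :=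
  gammaProd (List.ofFn fun j : Fin m =>
    (⟨(j : ℕ), by have := j.isLt; omega⟩ : Fin (2 * m))) ∘ conjOp

/-- The conjugate-linear operator `B = Γ_{m+1} ∘ Γ_{m+2} ∘ ⋯ ∘ Γ_{2m} ∘ κ`. -/
def opB (m : ℕ) : SpinorSpace m → SpinorSpace m :=
  gammaProd (List.ofFn fun j : Fin m =>
    (⟨m + (j : ℕ), by have := j.isLt; omega⟩ : Fin (2 * m))) ∘ conjOp

/-- The timelike gamma operator `Γ_0 = i^{m+1} Γ_1 Γ_2 ⋯ Γ_{2m}`. -/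
def gammaZero (m : ℕ) : SpinorSpace m → SpinorSpace m := fun f =>
  Complex.I ^ (m + 1) • gammaProd (List.ofFn fun I : Fin (2 * m) => I) f

/-- The Lorentzian family of gamma operators `Γ_0, Γ_1, …, Γ_{2m}`,
indexed by `Fin (2 * m + 1)`, with `Γ_0` in position `0`. -/
def gammaLor (m : ℕ) (A : Fin (2 * m + 1)) : SpinorSpace m → SpinorSpace m :=
  if h : (A : ℕ) = 0 then gammaZero m
  else gammaOp (⟨(A : ℕ) - 1, by have := A.isLt; omega⟩ : Fin (2 * m))

/-- The bilinear form `𝔄(σ, τ) = ⟨A σ, τ⟩`. -/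
def formA {m : ℕ} (σ τ : SpinorSpace m) : ℂ := herm (opA m σ) τ

/-- The bilinear form `𝔅(σ, τ) = ⟨B σ, τ⟩`. -/
def formB {m : ℕ} (σ τ : SpinorSpace m) : ℂ := herm (opB m σ) τ

/-!
The operators `Γ_1, …, Γ_{2m}` anticommute pairwise (by the canonical anticommutation relations
of the `c_j` and `a_j`) and are self-adjoint for `⟨·, ·⟩`, while `κ` commutes with
`Γ_1, …, Γ_m` and anticommutes with `Γ_{m+1}, …, Γ_{2m}`. For odd `m` this makes `B`
anticommute with every `Γ_I`, hence commute with `Γ_0`, a product of `2m` of them with the real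
coefficient `i^{m+1}`; and `Γ_0` is skew-adjoint, because reversing its `2m` factors costs the
sign `(-1)^{m(2m-1)} = -1`. So `𝔅(Γ_a σ, τ) = -𝔅(σ, Γ_a τ)` for every `a`, and applying this
twice together with `Γ_b Γ_a = -Γ_a Γ_b` gives the claim.
-/
section Anticommuting

variable {R ι : Type*} [Ring R] {γ : ι → R}

theorem prod_map_mul_of_anticomm_of_notMem (hγ : Pairwise fun i j => γ i * γ j = -(γ j * γ i))
    {l : List ι} {i : ι} (hi : i ∉ l) :
    (l.map γ).prod * γ i = (-1 : ℤ) ^ l.length • (γ i * (l.map γ).prod) := by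
  induction l with
  | nil => simp
  | cons j l ih =>
    rw [List.mem_cons, not_or] at hi
    rw [List.map_cons, List.prod_cons, mul_assoc, ih hi.2, mul_smul_comm, ← mul_assoc,
      hγ (Ne.symm hi.1), List.length_cons, pow_succ, mul_neg_one, neg_smul]
    simp only [neg_mul, smul_neg, mul_assoc]

theorem prod_map_mul_of_anticomm_of_mem (hγ : Pairwise fun i j => γ i * γ j = -(γ j * γ i))
    {l : List ι} {i : ι} (hl : l.Nodup) (hi : i ∈ l) :
    (l.map γ).prod * γ i = (-1 : ℤ) ^ (l.length - 1) • (γ i * (l.map γ).prod) := by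
  obtain ⟨s, t, rfl⟩ := List.append_of_mem hi
  have hs : i ∉ s := fun h => List.disjoint_of_nodup_append hl h List.mem_cons_self
  have ht : i ∉ t := (List.nodup_cons.1 (List.nodup_append.1 hl).2.1).1
  have hlen : (s ++ i :: t).length - 1 = s.length + t.length := by simp
  rw [hlen, List.map_append, List.map_cons, List.prod_append, List.prod_cons, mul_assoc,
    mul_assoc, prod_map_mul_of_anticomm_of_notMem hγ ht, mul_smul_comm, mul_smul_comm,
    ← mul_assoc, prod_map_mul_of_anticomm_of_notMem hγ hs, smul_mul_assoc, smul_smul, pow_add,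
    mul_comm, mul_assoc]

theorem prod_map_reverse_of_anticomm (hγ : Pairwise fun i j => γ i * γ j = -(γ j * γ i))
    {l : List ι} (hl : l.Nodup) :
    (l.reverse.map γ).prod = (-1 : ℤ) ^ l.length.choose 2 • (l.map γ).prod := by
  induction l with
  | nil => simp
  | cons j l ih =>
    rw [List.nodup_cons] at hl
    rw [List.reverse_cons, List.map_append, List.prod_append, ih hl.2, List.map_singleton,
      List.prod_singleton, smul_mul_assoc, prod_map_mul_of_anticomm_of_notMem hγ hl.1, smul_smul,
      ← pow_add, List.length_cons, Nat.choose_succ_succ', Nat.choose_one_right, add_comm l.length,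
      List.map_cons, List.prod_cons]

end Anticommuting

structure IsCAR {A ι : Type*} [Ring A] [DecidableEq ι] (c a : ι → A) : Prop where
  creation_anticomm : ∀ j k, c j * c k + c k * c j = 0
  annihilation_anticomm : ∀ j k, a j * a k + a k * a j = 0
  creation_annihilation_anticomm : ∀ j k, c j * a k + a k * c j = if j = k then 1 else 0

namespace IsCAR

variable {A ι : Type*} [Ring A] [DecidableEq ι] {c a : ι → A}

theorem add_mul_add (h : IsCAR c a) {j k : ι} (hjk : j ≠ k) :
    (c j + a j) * (c k + a k) = -((c k + a k) * (c j + a j)) := by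
  rw [eq_neg_iff_add_eq_zero]
  calc (c j + a j) * (c k + a k) + (c k + a k) * (c j + a j)
      = (c j * c k + c k * c j) + (a j * a k + a k * a j) + (c j * a k + a k * c j)
          + (c k * a j + a j * c k) := by noncomm_ring
    _ = 0 := by simp [h.1, h.2, h.3, hjk, hjk.symm]

theorem smul_sub_mul_smul_sub [Algebra ℂ A] (h : IsCAR c a) {j k : ι} (hjk : j ≠ k) :
    (Complex.I • (c j - a j)) * (Complex.I • (c k - a k))
      = -((Complex.I • (c k - a k)) * (Complex.I • (c j - a j))) := by
  rw [eq_neg_iff_add_eq_zero]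
  calc (Complex.I • (c j - a j)) * (Complex.I • (c k - a k))
        + (Complex.I • (c k - a k)) * (Complex.I • (c j - a j))
      = -((c j * c k + c k * c j) + (a j * a k + a k * a j) - (c j * a k + a k * c j)
          - (c k * a j + a j * c k)) := by
        simp only [smul_mul_smul_comm, Complex.I_mul_I, neg_one_smul]; noncomm_ring
    _ = 0 := by simp [h.1, h.2, h.3, hjk, hjk.symm]

theorem add_mul_smul_sub [Algebra ℂ A] (h : IsCAR c a) (j k : ι) :
    (c j + a j) * (Complex.I • (c k - a k)) = -((Complex.I • (c k - a k)) * (c j + a j)) := by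
  rw [eq_neg_iff_add_eq_zero]
  calc (c j + a j) * (Complex.I • (c k - a k)) + (Complex.I • (c k - a k)) * (c j + a j)
      = Complex.I • ((c j * c k + c k * c j) - (a j * a k + a k * a j)
          - (c j * a k + a k * c j) + (c k * a j + a j * c k)) := by
        simp only [mul_smul_comm, smul_mul_assoc, ← smul_add]; congr 1; noncomm_ring
    _ = 0 := by simp [h.1, h.2, h.3, eq_comm]

end IsCAR

section Spinor

open Finset

variable {m : ℕ}

def fermionSign (j : Fin m) (S : Finset (Fin m)) : ℂ := (-1) ^ #{i ∈ S | i < j}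

theorem creation_apply (j : Fin m) (f : SpinorSpace m) (S : Finset (Fin m)) :
    creation j f S = if j ∈ S then fermionSign j S * f (S.erase j) else 0 := rfl

theorem annihilation_apply (j : Fin m) (f : SpinorSpace m) (S : Finset (Fin m)) :
    annihilation j f S = if j ∈ S then 0 else fermionSign j S * f (insert j S) := rfl

@[simp]
theorem conj_fermionSign (j : Fin m) (S : Finset (Fin m)) :
    starRingEnd ℂ (fermionSign j S) = fermionSign j S := by
  simp [fermionSign]

@[simp]
theorem fermionSign_mul_self (j : Fin m) (S : Finset (Fin m)) :
    fermionSign j S * fermionSign j S = 1 := by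
  simp [fermionSign, ← mul_pow]

theorem fermionSign_insert {k : Fin m} {S : Finset (Fin m)} (hk : k ∉ S) (j : Fin m) :
    fermionSign j (insert k S) = (if k < j then -1 else 1) * fermionSign j S := by
  unfold fermionSign
  rw [filter_insert]
  split_ifs with hkj
  · rw [card_insert_of_notMem (by simp [hk]), pow_succ, mul_comm]
  · rw [one_mul]

theorem fermionSign_erase {k : Fin m} {S : Finset (Fin m)} (hk : k ∈ S) (j : Fin m) :
    fermionSign j (S.erase k) = (if k < j then -1 else 1) * fermionSign j S := by
  conv_rhs => rw [← insert_erase hk, fermionSign_insert (notMem_erase k S)]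
  split_ifs <;> simp

theorem fermionSign_insert_self {j : Fin m} {S : Finset (Fin m)} (hj : j ∉ S) :
    fermionSign j (insert j S) = fermionSign j S := by
  simp [fermionSign_insert hj]

theorem fermionSign_erase_self (j : Fin m) (S : Finset (Fin m)) :
    fermionSign j (S.erase j) = fermionSign j S := by
  by_cases hj : j ∈ S
  · simp [fermionSign_erase hj]
  · rw [erase_eq_of_notMem hj]

theorem ite_lt_neg_one_add_ite_lt_neg_one {j k : Fin m} (hjk : j ≠ k) :
    ((if j < k then -1 else 1) + (if k < j then -1 else 1) : ℂ) = 0 := by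
  rcases hjk.lt_or_gt with h | h <;> simp [h, h.not_gt]

theorem creation_anticomm (j k : Fin m) (f : SpinorSpace m) :
    creation j (creation k f) + creation k (creation j f) = 0 := by
  funext S
  simp only [Pi.add_apply, Pi.zero_apply, creation_apply]
  obtain rfl | hjk := eq_or_ne j k
  · simp
  by_cases hj : j ∈ S <;> by_cases hk : k ∈ S
  · rw [if_pos hj, if_pos hk, if_pos (mem_erase.2 ⟨hjk.symm, hk⟩),
      if_pos (mem_erase.2 ⟨hjk, hj⟩), fermionSign_erase hj, fermionSign_erase hk,
      erase_right_comm]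
    linear_combination (fermionSign j S * fermionSign k S * f ((S.erase k).erase j)) *
      ite_lt_neg_one_add_ite_lt_neg_one hjk
  all_goals simp_all

theorem annihilation_anticomm (j k : Fin m) (f : SpinorSpace m) :
    annihilation j (annihilation k f) + annihilation k (annihilation j f) = 0 := by
  funext S
  simp only [Pi.add_apply, Pi.zero_apply, annihilation_apply]
  obtain rfl | hjk := eq_or_ne j k
  · simp
  by_cases hj : j ∉ S <;> by_cases hk : k ∉ S
  · rw [if_neg hj, if_neg hk, if_neg (by simp [hk, hjk.symm]), if_neg (by simp [hj, hjk]),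
      fermionSign_insert hj, fermionSign_insert hk, insert_comm]
    linear_combination (fermionSign j S * fermionSign k S * f (insert j (insert k S))) *
      ite_lt_neg_one_add_ite_lt_neg_one hjk
  all_goals simp_all

theorem creation_annihilation_anticomm_of_ne {j k : Fin m} (hjk : j ≠ k) (f : SpinorSpace m) :
    creation j (annihilation k f) + annihilation k (creation j f) = 0 := by
  funext S
  simp only [Pi.add_apply, Pi.zero_apply, creation_apply, annihilation_apply]
  by_cases hj : j ∈ S <;> by_cases hk : k ∉ S
  · rw [if_pos hj, if_neg hk, if_neg (by simp [hk]), if_pos (mem_insert_of_mem hj),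
      fermionSign_erase hj, fermionSign_insert hk, erase_insert_of_ne hjk.symm]
    linear_combination (fermionSign j S * fermionSign k S * f (insert k (S.erase j))) *
      ite_lt_neg_one_add_ite_lt_neg_one hjk
  all_goals simp_all [eq_comm]

theorem creation_annihilation_anticomm_self (j : Fin m) (f : SpinorSpace m) :
    creation j (annihilation j f) + annihilation j (creation j f) = f := by
  funext S
  simp only [Pi.add_apply, creation_apply, annihilation_apply]
  by_cases hj : j ∈ S
  · simp [hj, fermionSign_erase_self, ← mul_assoc]
  · simp [hj, fermionSign_insert_self hj, ← mul_assoc]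

def creationₗ (j : Fin m) : Module.End ℂ (SpinorSpace m) where
  toFun := creation j
  map_add' f g := by funext S; simp only [creation_apply, Pi.add_apply]; split_ifs <;> ring
  map_smul' z f := by
    funext S; simp only [creation_apply, Pi.smul_apply, smul_eq_mul]; split_ifs <;> simp; ring

def annihilationₗ (j : Fin m) : Module.End ℂ (SpinorSpace m) where
  toFun := annihilation j
  map_add' f g := by funext S; simp only [annihilation_apply, Pi.add_apply]; split_ifs <;> ring
  map_smul' z f := by
    funext S; simp only [annihilation_apply, Pi.smul_apply, smul_eq_mul]; split_ifs <;> simp; ring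

@[simp]
theorem creationₗ_apply (j : Fin m) (f : SpinorSpace m) : creationₗ j f = creation j f := rfl

@[simp]
theorem annihilationₗ_apply (j : Fin m) (f : SpinorSpace m) :
    annihilationₗ j f = annihilation j f := rfl

theorem isCAR_creationₗ_annihilationₗ : IsCAR (creationₗ (m := m)) annihilationₗ where
  creation_anticomm j k := LinearMap.ext fun f => by simpa using creation_anticomm j k f
  annihilation_anticomm j k := LinearMap.ext fun f => by simpa using annihilation_anticomm j k f
  creation_annihilation_anticomm j k := by
    split_ifs with hjk
    · subst hjk
      exact LinearMap.ext fun f => by simpa using creation_annihilation_anticomm_self j f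
    · exact LinearMap.ext fun f => by simpa using creation_annihilation_anticomm_of_ne hjk f

def gammaOpₗ (I : Fin (2 * m)) : Module.End ℂ (SpinorSpace m) :=
  if h : (I : ℕ) < m then
    creationₗ ⟨I, h⟩ + annihilationₗ ⟨I, h⟩
  else
    Complex.I • (creationₗ ⟨I - m, by omega⟩ - annihilationₗ ⟨I - m, by omega⟩)

@[simp]
theorem gammaOpₗ_apply (I : Fin (2 * m)) (f : SpinorSpace m) : gammaOpₗ I f = gammaOp I f := by
  unfold gammaOpₗ gammaOp
  split_ifs <;> rfl

theorem pairwise_anticomm_gammaOpₗ :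
    Pairwise fun I J : Fin (2 * m) => gammaOpₗ I * gammaOpₗ J = -(gammaOpₗ J * gammaOpₗ I) := by
  intro I J hIJ
  have hCAR := isCAR_creationₗ_annihilationₗ (m := m)
  have hIJ' : (I : ℕ) ≠ J := Fin.val_ne_of_ne hIJ
  unfold gammaOpₗ
  split_ifs with hI hJ hJ
  · exact hCAR.add_mul_add (by simpa [Fin.ext_iff] using hIJ')
  · exact hCAR.add_mul_smul_sub _ _
  · exact neg_eq_iff_eq_neg.1 (hCAR.add_mul_smul_sub _ _).symm
  · exact hCAR.smul_sub_mul_smul_sub (by simp [Fin.ext_iff]; omega)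

theorem gammaProd_eq_prod (l : List (Fin (2 * m))) (f : SpinorSpace m) :
    gammaProd l f = (l.map gammaOpₗ).prod f := by
  induction l with
  | nil => rfl
  | cons I l ih =>
    rw [List.map_cons, List.prod_cons, Module.End.mul_apply, ← ih, gammaOpₗ_apply]
    rfl

def gammaZeroₗ (m : ℕ) : Module.End ℂ (SpinorSpace m) :=
  Complex.I ^ (m + 1) • ((List.finRange (2 * m)).map gammaOpₗ).prod

@[simp]
theorem gammaZeroₗ_apply (f : SpinorSpace m) : gammaZeroₗ m f = gammaZero m f := by
  rw [gammaZero, gammaProd_eq_prod]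
  rfl

theorem gammaZeroₗ_anticomm (I : Fin (2 * m)) :
    gammaZeroₗ m * gammaOpₗ I = -(gammaOpₗ I * gammaZeroₗ m) := by
  have hodd : Odd (2 * m - 1) := ⟨m - 1, by have := I.isLt; omega⟩
  rw [gammaZeroₗ, smul_mul_assoc, prod_map_mul_of_anticomm_of_mem pairwise_anticomm_gammaOpₗ
    (List.nodup_finRange _) (List.mem_finRange I), List.length_finRange, hodd.neg_one_pow,
    neg_one_zsmul, mul_smul_comm, smul_neg]

def gammaLorₗ (m : ℕ) (a : Fin (2 * m + 1)) : Module.End ℂ (SpinorSpace m) :=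
  if h : (a : ℕ) = 0 then gammaZeroₗ m else gammaOpₗ ⟨a - 1, by omega⟩

@[simp]
theorem gammaLorₗ_apply (a : Fin (2 * m + 1)) (f : SpinorSpace m) :
    gammaLorₗ m a f = gammaLor m a f := by
  unfold gammaLorₗ gammaLor
  split_ifs <;> simp

theorem gammaLorₗ_anticomm {a b : Fin (2 * m + 1)} (hab : a ≠ b) :
    gammaLorₗ m a * gammaLorₗ m b = -(gammaLorₗ m b * gammaLorₗ m a) := by
  unfold gammaLorₗ
  split_ifs with ha hb hb
  · exact absurd (Fin.ext (ha.trans hb.symm)) hab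
  · exact gammaZeroₗ_anticomm _
  · exact neg_eq_iff_eq_neg.1 (gammaZeroₗ_anticomm _).symm
  · exact pairwise_anticomm_gammaOpₗ (by simp [Fin.ext_iff]; omega)

theorem gammaLor_anticomm {a b : Fin (2 * m + 1)} (hab : a ≠ b) (f : SpinorSpace m) :
    gammaLor m a (gammaLor m b f) = -gammaLor m b (gammaLor m a f) := by
  simpa using LinearMap.congr_fun (gammaLorₗ_anticomm hab) f

theorem herm_add_left (f g h : SpinorSpace m) : herm (f + g) h = herm f h + herm g h := by
  simp [herm, add_mul, sum_add_distrib]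

theorem herm_add_right (f g h : SpinorSpace m) : herm f (g + h) = herm f g + herm f h := by
  simp [herm, mul_add, sum_add_distrib]

theorem herm_sub_left (f g h : SpinorSpace m) : herm (f - g) h = herm f h - herm g h := by
  simp [herm, sub_mul, sum_sub_distrib]

theorem herm_sub_right (f g h : SpinorSpace m) : herm f (g - h) = herm f g - herm f h := by
  simp [herm, mul_sub, sum_sub_distrib]

theorem herm_neg_left (f g : SpinorSpace m) : herm (-f) g = -herm f g := by
  simp [herm, sum_neg_distrib]

theorem herm_neg_right (f g : SpinorSpace m) : herm f (-g) = -herm f g := by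
  simp [herm, sum_neg_distrib]

theorem herm_smul_left (z : ℂ) (f g : SpinorSpace m) :
    herm (z • f) g = starRingEnd ℂ z * herm f g := by
  simp [herm, mul_sum, mul_assoc]

theorem herm_smul_right (z : ℂ) (f g : SpinorSpace m) : herm f (z • g) = z * herm f g := by
  simp [herm, mul_sum, mul_left_comm]

theorem conj_herm (f g : SpinorSpace m) : starRingEnd ℂ (herm f g) = herm g f := by
  simp [herm, mul_comm]

def toggle (j : Fin m) : Equiv.Perm (Finset (Fin m)) :=
  Function.Involutive.toPerm (fun S => if j ∈ S then S.erase j else insert j S) fun S => by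
    by_cases h : j ∈ S <;> simp [h]

theorem toggle_apply (j : Fin m) (S : Finset (Fin m)) :
    toggle j S = if j ∈ S then S.erase j else insert j S := rfl

theorem herm_creation (j : Fin m) (f g : SpinorSpace m) :
    herm (creation j f) g = herm f (annihilation j g) := by
  refine (Fintype.sum_equiv (toggle j) _ _ fun S => ?_).symm
  by_cases h : j ∈ S
  · simp [toggle_apply, creation_apply, annihilation_apply, h]
  · simp [toggle_apply, creation_apply, annihilation_apply, h, fermionSign_insert_self h]
    ring

theorem herm_annihilation (j : Fin m) (f g : SpinorSpace m) :
    herm (annihilation j f) g = herm f (creation j g) := by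
  rw [← conj_herm, ← herm_creation, conj_herm]

theorem herm_gammaOp (I : Fin (2 * m)) (f g : SpinorSpace m) :
    herm (gammaOp I f) g = herm f (gammaOp I g) := by
  unfold gammaOp
  split_ifs
  · rw [herm_add_left, herm_creation, herm_annihilation, herm_add_right, add_comm]
  · rw [herm_smul_left, herm_smul_right, herm_sub_left, herm_sub_right, herm_creation,
      herm_annihilation, Complex.conj_I]
    ring

theorem herm_list_prod_apply {l : List (Module.End ℂ (SpinorSpace m))}
    (hl : ∀ T ∈ l, ∀ f g, herm (T f) g = herm f (T g)) (f g : SpinorSpace m) :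
    herm (l.prod f) g = herm f (l.reverse.prod g) := by
  induction l generalizing g with
  | nil => rfl
  | cons T l ih =>
    rw [List.forall_mem_cons] at hl
    rw [List.prod_cons, Module.End.mul_apply, hl.1, ih hl.2, List.reverse_cons, List.prod_append,
      List.prod_singleton, Module.End.mul_apply]

theorem conj_I_pow_succ_of_odd (hodd : Odd m) :
    starRingEnd ℂ (Complex.I ^ (m + 1)) = Complex.I ^ (m + 1) := by
  rw [map_pow, Complex.conj_I, Even.neg_pow (by simpa [Nat.even_add_one] using hodd)]

theorem odd_choose_two_of_odd (hodd : Odd m) : Odd ((2 * m).choose 2) := by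
  rw [Nat.choose_two_right, mul_assoc, Nat.mul_div_cancel_left _ two_pos]
  exact hodd.mul ⟨m - 1, by have := hodd.pos; omega⟩

theorem herm_gammaZeroₗ (hodd : Odd m) (f g : SpinorSpace m) :
    herm (gammaZeroₗ m f) g = -herm f (gammaZeroₗ m g) := by
  have hself : ∀ T ∈ (List.finRange (2 * m)).map gammaOpₗ, ∀ f g : SpinorSpace m,
      herm (T f) g = herm f (T g) := by
    simpa using fun I f g => herm_gammaOp I f g
  rw [gammaZeroₗ, LinearMap.smul_apply, LinearMap.smul_apply, herm_smul_left,
    conj_I_pow_succ_of_odd hodd, herm_list_prod_apply hself, ← List.map_reverse,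
    prod_map_reverse_of_anticomm pairwise_anticomm_gammaOpₗ (List.nodup_finRange _),
    List.length_finRange, (odd_choose_two_of_odd hodd).neg_one_pow, neg_one_zsmul,
    LinearMap.neg_apply, herm_neg_right, herm_smul_right, mul_neg]

theorem conjOp_creation (j : Fin m) (f : SpinorSpace m) :
    conjOp (creation j f) = creation j (conjOp f) := by
  funext S
  simp only [conjOp, creation_apply, apply_ite (starRingEnd ℂ), map_mul, conj_fermionSign,
    map_zero]

theorem conjOp_annihilation (j : Fin m) (f : SpinorSpace m) :
    conjOp (annihilation j f) = annihilation j (conjOp f) := by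
  funext S
  simp only [conjOp, annihilation_apply, apply_ite (starRingEnd ℂ), map_mul, conj_fermionSign,
    map_zero]

theorem conjOp_smul (z : ℂ) (f : SpinorSpace m) :
    conjOp (z • f) = starRingEnd ℂ z • conjOp f := by
  funext S
  simp [conjOp]

theorem conjOp_gammaOp_of_lt {I : Fin (2 * m)} (hI : (I : ℕ) < m) (f : SpinorSpace m) :
    conjOp (gammaOp I f) = gammaOp I (conjOp f) := by
  funext S
  simp [gammaOp, hI, conjOp, ← conjOp_creation, ← conjOp_annihilation]

theorem conjOp_gammaOp_of_le {I : Fin (2 * m)} (hI : m ≤ (I : ℕ)) (f : SpinorSpace m) :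
    conjOp (gammaOp I f) = -gammaOp I (conjOp f) := by
  funext S
  simp [gammaOp, hI.not_gt, conjOp, ← conjOp_creation, ← conjOp_annihilation]

def upperIndices (m : ℕ) : List (Fin (2 * m)) :=
  List.ofFn fun j : Fin m => ⟨m + j, by omega⟩

theorem mem_upperIndices {I : Fin (2 * m)} : I ∈ upperIndices m ↔ m ≤ (I : ℕ) := by
  simp only [upperIndices, List.mem_ofFn, Fin.ext_iff]
  exact ⟨fun ⟨j, hj⟩ => by omega, fun h => ⟨⟨I - m, by omega⟩, by simp; omega⟩⟩

theorem nodup_upperIndices : (upperIndices m).Nodup :=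
  List.nodup_ofFn.2 fun i j h => by simpa [Fin.ext_iff] using h

theorem length_upperIndices : (upperIndices m).length = m := List.length_ofFn

theorem opB_apply (f : SpinorSpace m) :
    opB m f = ((upperIndices m).map gammaOpₗ).prod (conjOp f) := by
  rw [opB, Function.comp_apply, gammaProd_eq_prod]
  rfl

theorem opB_smul (z : ℂ) (f : SpinorSpace m) :
    opB m (z • f) = starRingEnd ℂ z • opB m f := by
  rw [opB_apply, opB_apply, conjOp_smul, map_smul]

theorem opB_gammaOp (hodd : Odd m) (I : Fin (2 * m)) (f : SpinorSpace m) :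
    opB m (gammaOp I f) = -gammaOp I (opB m f) := by
  rw [opB_apply, opB_apply]
  by_cases hI : (I : ℕ) < m
  · have hmul := prod_map_mul_of_anticomm_of_notMem pairwise_anticomm_gammaOpₗ
      (mt mem_upperIndices.1 (not_le.2 hI))
    rw [length_upperIndices, hodd.neg_one_pow, neg_one_zsmul] at hmul
    simpa [conjOp_gammaOp_of_lt hI] using LinearMap.congr_fun hmul (conjOp f)
  · have hmul := prod_map_mul_of_anticomm_of_mem pairwise_anticomm_gammaOpₗ nodup_upperIndices
      (mem_upperIndices.2 (not_lt.1 hI))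
    rw [length_upperIndices, (Nat.Odd.sub_odd hodd odd_one).neg_one_pow, one_zsmul] at hmul
    simpa [conjOp_gammaOp_of_le (not_lt.1 hI)] using LinearMap.congr_fun hmul (conjOp f)

theorem opB_prod_map_gammaOpₗ (hodd : Odd m) (l : List (Fin (2 * m))) (f : SpinorSpace m) :
    opB m ((l.map gammaOpₗ).prod f)
      = (-1 : ℤ) ^ l.length • (l.map gammaOpₗ).prod (opB m f) := by
  induction l with
  | nil => simp
  | cons I l ih =>
    have h := opB_gammaOp hodd I ((l.map gammaOpₗ).prod f)
    rw [← gammaOpₗ_apply, ← gammaOpₗ_apply, ih, map_zsmul] at h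
    rw [List.map_cons, List.prod_cons, Module.End.mul_apply, Module.End.mul_apply, h,
      List.length_cons, pow_succ, mul_neg_one, neg_smul]

theorem opB_gammaZeroₗ (hodd : Odd m) (f : SpinorSpace m) :
    opB m (gammaZeroₗ m f) = gammaZeroₗ m (opB m f) := by
  rw [gammaZeroₗ, LinearMap.smul_apply, LinearMap.smul_apply, opB_smul,
    conj_I_pow_succ_of_odd hodd, opB_prod_map_gammaOpₗ hodd, List.length_finRange,
    (even_two_mul m).neg_one_pow, one_zsmul]

theorem formB_gammaLor_left (hodd : Odd m) (a : Fin (2 * m + 1)) (f g : SpinorSpace m) :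
    formB (gammaLor m a f) g = -formB f (gammaLor m a g) := by
  rw [← gammaLorₗ_apply, ← gammaLorₗ_apply, gammaLorₗ]
  split_ifs
  · rw [formB, formB, opB_gammaZeroₗ hodd, herm_gammaZeroₗ hodd]
  · rw [formB, formB, gammaOpₗ_apply, gammaOpₗ_apply, opB_gammaOp hodd, herm_neg_left,
      herm_gammaOp]

end Spinor

theorem formB_spin_lorentz_invariant_general (m : ℕ) (hodd : Odd m) :
    ∀ a b : Fin (2 * m + 1), a ≠ b → ∀ σ τ : SpinorSpace m,
      formB (gammaLor m a (gammaLor m b σ)) τ + formB σ (gammaLor m a (gammaLor m b τ)) = 0 := by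
  intro a b hab σ τ
  rw [formB_gammaLor_left hodd, formB_gammaLor_left hodd, gammaLor_anticomm hab.symm, formB,
    formB, herm_neg_right]
  ring

/-- for odd `m`, the bilinear form `𝔅` is `Spin(1, 2m)`-invariant:
`𝔅(Γ_a Γ_b σ, τ) + 𝔅(σ, Γ_a Γ_b τ) = 0` for all distinct `a, b ∈ {0, 1, …, 2m}`. -/
theorem formB_spin_lorentz_invariant (m : ℕ) (hm : 1 ≤ m) (hodd : Odd m) :
    ∀ a b : Fin (2 * m + 1), a ≠ b → ∀ σ τ : SpinorSpace m,
      formB (gammaLor m a (gammaLor m b σ)) τ + formB σ (gammaLor m a (gammaLor m b τ)) = 0 :=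
  formB_spin_lorentz_invariant_general m hodd
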